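/- The Pastro polynomials and their biorthogonal partners satisfy the second Baxter recurrence: define Q_n(x) = R_n(x^{-1};a,b;q) for x ≠ 0. Then for every nonnegative integer n and all real x ≠ 0, Q_{n+1}(x) = x Q_n(x) - β_n x^n P_n(x^{-1};a,b;q), where β_n = -(a^{-1} b)^{-n-1} (b q^{-1};q)_{n+1} / (a b^{-1} q;q)_{n+1}. -/

import Mathlib

/-- The q-Pochhammer symbol `(z;q)_k = ∏_{j=0}^{k-1} (1 - z q^j)`. -/
noncomputable def qPoch (q z : ℝ) (k : ℕ) : ℝ :=
  ∏ j ∈ Finset.range k, (1 - z * q ^ j)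

/-- Coefficient `c_{n,k}` of the monic Pastro polynomial. -/
noncomputable def pastroCoeff (q a b : ℝ) (n k : ℕ) : ℝ :=
  (qPoch q (a⁻¹ * b * q ^ (1 - (n : ℤ))) n * qPoch q q n /
      (qPoch q (q ^ (-(n : ℤ))) n * qPoch q b n)) *
    (qPoch q (q ^ (-(n : ℤ))) k * qPoch q b k /
      (qPoch q (a⁻¹ * b * q ^ (1 - (n : ℤ))) k * qPoch q q k))

/-- The monic Pastro polynomial `P_n(x;a,b;q)`. -/
noncomputable def pastroP (q a b : ℝ) (n : ℕ) (x : ℝ) : ℝ :=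
  ∑ k ∈ Finset.range (n + 1), pastroCoeff q a b n k * x ^ k

/-- The biorthogonal partner `R_n(x;a,b;q)` of the Pastro polynomials. -/
noncomputable def pastroR (q a b : ℝ) (n : ℕ) (x : ℝ) : ℝ :=
  (qPoch q (q ^ (-(n : ℤ))) n * qPoch q (b * q⁻¹) n /
      (qPoch q (a⁻¹ * b * q ^ (-(n : ℤ))) n * qPoch q q n)) *
    ∑ k ∈ Finset.range (n + 1),
      (qPoch q (q ^ (-(n : ℤ))) k * qPoch q (a * b⁻¹ * q) k /
          (qPoch q (b⁻¹ * q ^ (2 - (n : ℤ))) k * qPoch q q k)) *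
        (q ^ 2 / (a * x)) ^ k

/-! Both sides are polynomials in `x`, and reflecting the `q`-shifted factorials with negative
powers of `q` in the definitions gives closed forms for their coefficients. With `t = a b⁻¹` and
`c = b q⁻¹`, the coefficient of `x ^ k` in `Q_n(x)` is
`t^(n-k) [n, k]_q (t q; q)_k (c; q)_(n-k) / (t q; q)_n`, and that of `-β_n x^n P_n(x⁻¹)` is
`t^(n-k+1) q^k [n, k]_q (t; q)_k (c; q)_(n-k+1) / (t q; q)_(n+1)`. Comparing coefficients of
`x ^ (k+1)`, the recurrence becomes
`[n+1, k+1]_q (1 - t q^(k+1)) = [n, k]_q (1 - t q^(n+1)) + q^(k+1) [n, k+1]_q (1 - t)`,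
which is `1 - t q^(k+1)` times one `q`-Pascal rule minus `t q^(k+1)` times the other. -/

@[simp]
theorem qPoch_zero (q z : ℝ) : qPoch q z 0 = 1 := rfl

theorem qPoch_succ (q z : ℝ) (k : ℕ) : qPoch q z (k + 1) = qPoch q z k * (1 - z * q ^ k) :=
  Finset.prod_range_succ _ _

theorem qPoch_succ' (q z : ℝ) (k : ℕ) : qPoch q z (k + 1) = (1 - z) * qPoch q (z * q) k := by
  simp only [qPoch, Finset.prod_range_succ', pow_succ', pow_zero, mul_one]
  ring_nf

theorem qPoch_ne_zero {q z : ℝ} {k : ℕ} (h : ∀ j < k, z * q ^ j ≠ 1) : qPoch q z k ≠ 0 :=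
  Finset.prod_ne_zero_iff.mpr fun j hj => sub_ne_zero.mpr (h j (Finset.mem_range.mp hj)).symm

theorem qPoch_mul_zpow_neg_mul_qPoch {q : ℝ} (hq : q ≠ 0) {w : ℝ} (hw : w ≠ 0) (N : ℕ) :
    qPoch q (w * q ^ (-(N : ℤ))) N * qPoch q q N =
      w ^ N * qPoch q (q ^ (-(N : ℤ))) N * qPoch q (w⁻¹ * q) N := by
  induction N with
  | zero => simp
  | succ N ih =>
    have hshift : q ^ (-((N + 1 : ℕ) : ℤ)) * q = q ^ (-(N : ℤ)) := by
      rw [← zpow_add_one₀ hq]; push_cast; ring_nf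
    have hu : q ^ (N + 1) ≠ 0 := pow_ne_zero _ hq
    rw [qPoch_succ' q (w * _), mul_assoc w, hshift, qPoch_succ' q (q ^ _), hshift,
      qPoch_succ q q, qPoch_succ q (w⁻¹ * q), zpow_neg, zpow_natCast]
    calc (1 - w * (q ^ (N + 1))⁻¹) * qPoch q (w * q ^ (-(N : ℤ))) N *
          (qPoch q q N * (1 - q * q ^ N))
        = (1 - w * (q ^ (N + 1))⁻¹) * (1 - q * q ^ N) *
            (qPoch q (w * q ^ (-(N : ℤ))) N * qPoch q q N) := by ring
      _ = (1 - w * (q ^ (N + 1))⁻¹) * (1 - q * q ^ N) *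
            (w ^ N * qPoch q (q ^ (-(N : ℤ))) N * qPoch q (w⁻¹ * q) N) := by rw [ih]
      _ = _ := by field_simp; ring

theorem mul_pow_ne_one_of_zpow_ne_one {q : ℝ} (hq1 : ∀ k : ℤ, k ≠ 0 → q ^ k ≠ 1) (j : ℕ) :
    q * q ^ j ≠ 1 := by
  rw [← pow_succ', ← zpow_natCast]
  exact hq1 _ (by omega)

theorem qPoch_zpow_neg_ne_zero {q : ℝ} (hq : q ≠ 0) (hq1 : ∀ k : ℤ, k ≠ 0 → q ^ k ≠ 1) {n k : ℕ}
    (hk : k ≤ n) : qPoch q (q ^ (-(n : ℤ))) k ≠ 0 :=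
  qPoch_ne_zero fun j hj => by
    rw [← zpow_natCast, ← zpow_add₀ hq]
    exact hq1 _ (by omega)

theorem inv_mul_zpow_ne_one {q w : ℝ} (h : ∀ m : ℤ, w * q ^ m ≠ 1) (m : ℤ) : w⁻¹ * q ^ m ≠ 1 := by
  intro hm
  apply h (-m)
  rw [zpow_neg, ← inv_inv w, ← mul_inv, hm, inv_one]

theorem mul_zpow_mul_pow_ne_one {q w : ℝ} (hq : q ≠ 0) (h : ∀ m : ℤ, w * q ^ m ≠ 1) (e : ℤ)
    (j : ℕ) : w * q ^ e * q ^ j ≠ 1 := by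
  simpa only [mul_assoc, ← zpow_natCast, ← zpow_add₀ hq] using h (e + j)

/-- The Gaussian binomial coefficient `[k + m, k]_q`, indexed so that no subtraction occurs. -/
noncomputable def qBinom (q : ℝ) (k m : ℕ) : ℝ :=
  qPoch q q (k + m) / (qPoch q q k * qPoch q q m)

theorem qBinom_comm (q : ℝ) (k m : ℕ) : qBinom q k m = qBinom q m k := by
  rw [qBinom, qBinom, add_comm, mul_comm]

section qBinom

variable {q : ℝ} (hq : ∀ j : ℕ, q * q ^ j ≠ 1)
include hq

theorem qPoch_self_ne_zero (k : ℕ) : qPoch q q k ≠ 0 :=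
  qPoch_ne_zero fun j _ => hq j

theorem qBinom_zero_right (k : ℕ) : qBinom q k 0 = 1 := by
  simp [qBinom, qPoch_self_ne_zero hq]

theorem qBinom_zero_left (m : ℕ) : qBinom q 0 m = 1 := by
  simp [qBinom, qPoch_self_ne_zero hq]

theorem qBinom_succ_succ (k m : ℕ) :
    qBinom q (k + 1) (m + 1) = qBinom q k (m + 1) + q ^ (k + 1) * qBinom q (k + 1) m := by
  have := qPoch_self_ne_zero hq k
  have := qPoch_self_ne_zero hq m
  have := sub_ne_zero.mpr (hq k).symm
  have := sub_ne_zero.mpr (hq m).symm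
  simp only [qBinom, show k + 1 + (m + 1) = k + m + 1 + 1 by ring,
    show k + 1 + m = k + m + 1 by ring, show k + (m + 1) = k + m + 1 by ring, qPoch_succ]
  field_simp
  ring

theorem qBinom_succ_succ' (k m : ℕ) :
    qBinom q (k + 1) (m + 1) = q ^ (m + 1) * qBinom q k (m + 1) + qBinom q (k + 1) m := by
  rw [qBinom_comm, qBinom_succ_succ hq, qBinom_comm, qBinom_comm q (m + 1), add_comm]

end qBinom

/-- The coefficient of `x ^ k` in `R_{k+m}(x⁻¹; a, b; q)`, with `t = a b⁻¹` and `c = b q⁻¹`. -/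
noncomputable def pastroRCoeff (q t c : ℝ) (k m : ℕ) : ℝ :=
  t ^ m * qBinom q k m * qPoch q (t * q) k * qPoch q c m / qPoch q (t * q) (k + m)

/-- The coefficient of `x ^ k` in `-β_{k+m} x^(k+m) P_{k+m}(x⁻¹; a, b; q)`, with `t = a b⁻¹` and
`c = b q⁻¹`. -/
noncomputable def pastroPCoeff (q t c : ℝ) (k m : ℕ) : ℝ :=
  t ^ (m + 1) * q ^ k * qBinom q k m * qPoch q t k * qPoch q c (m + 1) /
    qPoch q (t * q) (k + m + 1)

section Coeff

variable {q t : ℝ} (hq : ∀ j : ℕ, q * q ^ j ≠ 1) (ht : ∀ j : ℕ, t * q * q ^ j ≠ 1) (c : ℝ)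

include hq ht in
theorem pastroRCoeff_zero_right (k : ℕ) : pastroRCoeff q t c k 0 = 1 := by
  have := qPoch_ne_zero (k := k) fun j _ => ht j
  simp [pastroRCoeff, qBinom_zero_right hq, this]

include hq in
theorem pastroRCoeff_zero_succ (m : ℕ) :
    pastroRCoeff q t c 0 (m + 1) = pastroPCoeff q t c 0 m := by
  simp [pastroRCoeff, pastroPCoeff, qBinom_zero_left hq]

include hq ht in
theorem pastroRCoeff_succ_succ (k m : ℕ) :
    pastroRCoeff q t c (k + 1) (m + 1) =
      pastroRCoeff q t c k (m + 1) + pastroPCoeff q t c (k + 1) m := by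
  have h₁ := qPoch_ne_zero (q := q) (k := k + m + 1) fun j _ => ht j
  have h₂ := sub_ne_zero.mpr (ht (k + m + 1)).symm
  simp only [pastroRCoeff, pastroPCoeff, show k + 1 + (m + 1) = k + m + 1 + 1 by ring,
    show k + (m + 1) = k + m + 1 by ring, show k + 1 + m + 1 = k + m + 1 + 1 by ring,
    qPoch_succ _ _ (k + m + 1), qPoch_succ' q t k, qPoch_succ q (t * q) k]
  field_simp
  linear_combination (t ^ (m + 1) * qPoch q (t * q) k * qPoch q c (m + 1)) *
    (qBinom_succ_succ hq k m - t * q ^ (k + 1) * qBinom_succ_succ' hq k m)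

end Coeff

theorem pastroRCoeff_succ_left {q t c : ℝ} (hq : ∀ j : ℕ, q * q ^ j ≠ 1) (ht : t ≠ 0) {k m : ℕ}
    (hc : c * q ^ m ≠ 1) :
    pastroRCoeff q t c (k + 1) m = pastroRCoeff q t c k (m + 1) *
      ((1 - q * q ^ m) * (1 - t * q * q ^ k) / (t * (1 - c * q ^ m) * (1 - q * q ^ k))) := by
  have := qPoch_self_ne_zero hq k
  have := qPoch_self_ne_zero hq m
  have := sub_ne_zero.mpr (hq k).symm
  have := sub_ne_zero.mpr (hq m).symm
  have := sub_ne_zero.mpr hc.symm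
  simp only [pastroRCoeff, qBinom, show k + 1 + m = k + (m + 1) by ring, qPoch_succ,
    div_eq_mul_inv _ (qPoch q (t * q) _)]
  generalize (qPoch q (t * q) (k + (m + 1)))⁻¹ = D
  generalize c * q ^ m = C at *
  field_simp
  ring

theorem pastroPCoeff_succ_right {q t c : ℝ} (hq0 : q ≠ 0) (hq : ∀ j : ℕ, q * q ^ j ≠ 1) {j k : ℕ}
    (ht : t * q ^ j ≠ 1) :
    pastroPCoeff q t c j (k + 1) = pastroPCoeff q t c (j + 1) k *
      (t * (1 - q * q ^ j) * (1 - c * q * q ^ k) / (q * (1 - t * q ^ j) * (1 - q * q ^ k))) := by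
  have := qPoch_self_ne_zero hq j
  have := qPoch_self_ne_zero hq k
  have := sub_ne_zero.mpr (hq j).symm
  have := sub_ne_zero.mpr (hq k).symm
  have := sub_ne_zero.mpr ht.symm
  simp only [pastroPCoeff, qBinom, show j + 1 + k = j + (k + 1) by ring, qPoch_succ q q,
    qPoch_succ q t, qPoch_succ q c, div_eq_mul_inv _ (qPoch q (t * q) _)]
  generalize (qPoch q (t * q) (j + (k + 1) + 1))⁻¹ = D
  generalize t * q ^ j = T at *
  generalize 1 - q * q ^ j = Q at *
  field_simp
  ring

theorem sum_range_succ_mul_pow_eq {R : Type*} [CommSemiring R] {r ρ : ℕ → ℕ → R}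
    (h_top : ∀ k, r (k + 1) 0 = r k 0) (h_bot : ∀ m, r 0 (m + 1) = ρ 0 m)
    (h_mid : ∀ k m, r (k + 1) (m + 1) = r k (m + 1) + ρ (k + 1) m) (n : ℕ) (x : R) :
    ∑ k ∈ Finset.range (n + 1 + 1), r k (n + 1 - k) * x ^ k =
      x * ∑ k ∈ Finset.range (n + 1), r k (n - k) * x ^ k +
        ∑ k ∈ Finset.range (n + 1), ρ k (n - k) * x ^ k := by
  have hmid : ∀ k ∈ Finset.range n, r (k + 1) (n + 1 - (k + 1)) * x ^ (k + 1) =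
      x * (r k (n - k) * x ^ k) + ρ (k + 1) (n - (k + 1)) * x ^ (k + 1) := by
    intro k hk
    obtain ⟨m, rfl⟩ := Nat.exists_eq_add_of_lt (Finset.mem_range.mp hk)
    rw [show k + m + 1 + 1 - (k + 1) = m + 1 by omega, show k + m + 1 - k = m + 1 by omega,
      show k + m + 1 - (k + 1) = m by omega, h_mid]
    ring
  rw [Finset.sum_range_succ', Finset.sum_range_succ, Finset.sum_congr rfl hmid,
    Finset.sum_add_distrib, Finset.mul_sum, Finset.sum_range_succ _ n,
    Finset.sum_range_succ' (fun k => ρ k (n - k) * x ^ k)]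
  simp only [Nat.sub_self, Nat.sub_zero, h_top, h_bot]
  ring

noncomputable def pastroRConst (q a b : ℝ) (n : ℕ) : ℝ :=
  qPoch q (q ^ (-(n : ℤ))) n * qPoch q (b * q⁻¹) n /
    (qPoch q (a⁻¹ * b * q ^ (-(n : ℤ))) n * qPoch q q n)

noncomputable def pastroRTerm (q a b : ℝ) (n k : ℕ) : ℝ :=
  qPoch q (q ^ (-(n : ℤ))) k * qPoch q (a * b⁻¹ * q) k /
    (qPoch q (b⁻¹ * q ^ (2 - (n : ℤ))) k * qPoch q q k)

theorem pastroR_eq_const_mul_sum (q a b : ℝ) (n : ℕ) (x : ℝ) :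
    pastroR q a b n x = pastroRConst q a b n *
      ∑ k ∈ Finset.range (n + 1), pastroRTerm q a b n k * (q ^ 2 / (a * x)) ^ k :=
  rfl

theorem pastroRTerm_succ (q a b : ℝ) (n k : ℕ) :
    pastroRTerm q a b n (k + 1) = pastroRTerm q a b n k *
      ((1 - q ^ (-(n : ℤ)) * q ^ k) * (1 - a * b⁻¹ * q * q ^ k) /
        ((1 - b⁻¹ * q ^ (2 - (n : ℤ)) * q ^ k) * (1 - q * q ^ k))) := by
  simp only [pastroRTerm, qPoch_succ]
  rw [mul_mul_mul_comm, mul_mul_mul_comm (qPoch q (b⁻¹ * _) k), mul_div_mul_comm]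

/-- `β_n` of the second Baxter recurrence. -/
noncomputable def pastroBeta (q a b : ℝ) (n : ℕ) : ℝ :=
  -(a⁻¹ * b) ^ (-(n : ℤ) - 1) * qPoch q (b * q⁻¹) (n + 1) / qPoch q (a * b⁻¹ * q) (n + 1)

theorem pastroCoeff_succ (q a b : ℝ) (n k : ℕ) :
    pastroCoeff q a b n (k + 1) = pastroCoeff q a b n k *
      ((1 - q ^ (-(n : ℤ)) * q ^ k) * (1 - b * q ^ k) /
        ((1 - a⁻¹ * b * q ^ (1 - (n : ℤ)) * q ^ k) * (1 - q * q ^ k))) := by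
  simp only [pastroCoeff, qPoch_succ]
  rw [mul_mul_mul_comm (qPoch q (q ^ _) k), mul_mul_mul_comm (qPoch q (a⁻¹ * b * _) k),
    mul_div_mul_comm (qPoch q (q ^ _) k * _)]
  exact (mul_assoc _ _ _).symm

section ClosedForms

variable {q a b : ℝ} (hq : q ≠ 0) (hq1 : ∀ k : ℤ, k ≠ 0 → q ^ k ≠ 1) (ha : a ≠ 0) (hb : b ≠ 0)
  (hbq : ∀ m : ℤ, b * q ^ m ≠ 1) (habq : ∀ m : ℤ, a⁻¹ * b * q ^ m ≠ 1)

include habq in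
theorem mul_inv_mul_pow_ne_one (j : ℕ) : a * b⁻¹ * q ^ j ≠ 1 := by
  simpa only [mul_inv, inv_inv, zpow_natCast] using inv_mul_zpow_ne_one habq j

include hq hq1 ha hb in
theorem pastroRConst_eq (m : ℕ) :
    pastroRConst q a b m = (a * b⁻¹) ^ m * qPoch q (b * q⁻¹) m / qPoch q (a * b⁻¹ * q) m := by
  have hs : a⁻¹ * b = (a * b⁻¹)⁻¹ := by rw [mul_inv, inv_inv]
  have hpair := qPoch_mul_zpow_neg_mul_qPoch hq (w := (a * b⁻¹)⁻¹) (by simp [ha, hb]) m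
  have := qPoch_zpow_neg_ne_zero hq hq1 (le_refl m)
  have ht : a * b⁻¹ ≠ 0 := by simp [ha, hb]
  rw [inv_inv] at hpair
  rw [pastroRConst, hs, hpair]
  generalize a * b⁻¹ = t at *
  rw [inv_pow]
  field_simp

include hq hq1 ha hb hbq in
theorem pastroRTerm_succ_mul (k m : ℕ) :
    pastroRTerm q a b (k + (m + 1)) (k + 1) * (q ^ 2 / a) ^ (k + 1) =
      pastroRTerm q a b (k + (m + 1)) k * (q ^ 2 / a) ^ k *
        ((1 - q * q ^ m) * (1 - a * b⁻¹ * q * q ^ k) /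
          (a * b⁻¹ * (1 - b * q⁻¹ * q ^ m) * (1 - q * q ^ k))) := by
  have e1 : q ^ (-((k + (m + 1) : ℕ) : ℤ)) * q ^ k = (q * q ^ m)⁻¹ := by
    rw [zpow_neg, zpow_natCast, ← pow_succ', add_comm k, pow_add, mul_inv, mul_assoc,
      inv_mul_cancel₀ (pow_ne_zero _ hq), mul_one]
  have e2 : b⁻¹ * q ^ (2 - ((k + (m + 1) : ℕ) : ℤ)) * q ^ k = (b * q⁻¹ * q ^ m)⁻¹ := by
    rw [mul_assoc, ← zpow_natCast q k, ← zpow_add₀ hq,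
      show 2 - ((k + (m + 1) : ℕ) : ℤ) + k = -m + 1 by push_cast; ring,
      zpow_add_one₀ hq, zpow_neg, zpow_natCast, mul_inv, mul_inv, inv_inv]
    ring
  have hc : b * q⁻¹ * q ^ m ≠ 1 := by simpa using mul_zpow_mul_pow_ne_one hq hbq (-1) m
  have h1 := sub_ne_zero.mpr hc.symm
  have h2 := sub_ne_zero.mpr (mul_pow_ne_one_of_zpow_ne_one hq1 k).symm
  have h3 : 1 - (b * q⁻¹ * q ^ m)⁻¹ ≠ 0 := by
    rw [sub_ne_zero, ne_comm, inv_ne_one]; exact hc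
  rw [pastroRTerm_succ, pow_succ, mul_mul_mul_comm]
  congr 1
  rw [e1, e2, div_mul_eq_mul_div, div_eq_div_iff (by positivity) (by positivity)]
  field_simp
  ring

include hq hq1 ha hb hbq in
theorem pastroRConst_mul_pastroRTerm (k m : ℕ) :
    pastroRConst q a b (k + m) * pastroRTerm q a b (k + m) k * (q ^ 2 / a) ^ k =
      pastroRCoeff q (a * b⁻¹) (b * q⁻¹) k m := by
  induction k generalizing m with
  | zero =>
    simp [pastroRConst_eq hq hq1 ha hb, pastroRTerm, pastroRCoeff,
      qBinom_zero_left (mul_pow_ne_one_of_zpow_ne_one hq1)]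
  | succ k ih =>
    rw [show k + 1 + m = k + (m + 1) by ring, mul_assoc, pastroRTerm_succ_mul hq hq1 ha hb hbq,
      ← mul_assoc, ← mul_assoc, ih, pastroRCoeff_succ_left (mul_pow_ne_one_of_zpow_ne_one hq1)
      (by simp [ha, hb]) (by simpa using mul_zpow_mul_pow_ne_one hq hbq (-1) m)]

include hq hq1 ha hb in
theorem pastroCoeff_zero_eq (j : ℕ) :
    pastroCoeff q a b j 0 = (a⁻¹ * b * q) ^ j * qPoch q (a * b⁻¹) j / qPoch q b j := by
  have hpair := qPoch_mul_zpow_neg_mul_qPoch hq (w := a⁻¹ * b * q) (by simp [ha, hb, hq]) j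
  have := qPoch_zpow_neg_ne_zero hq hq1 (le_refl j)
  have hshift : a⁻¹ * b * q ^ (1 - (j : ℤ)) = a⁻¹ * b * q * q ^ (-(j : ℤ)) := by
    rw [mul_assoc _ q, ← zpow_one_add₀ hq, sub_eq_add_neg]
  rw [mul_inv, inv_mul_cancel_right₀ hq, mul_inv, inv_inv] at hpair
  simp only [pastroCoeff, hshift, hpair, qPoch_zero, mul_one, div_one]
  field_simp

include hq in
theorem neg_pastroBeta_eq (j : ℕ) :
    -pastroBeta q a b j =
      (a * b⁻¹) ^ (j + 1) * (1 - b * q⁻¹) * qPoch q b j / qPoch q (a * b⁻¹ * q) (j + 1) := by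
  rw [pastroBeta, show a⁻¹ * b = (a * b⁻¹)⁻¹ by rw [mul_inv, inv_inv], inv_zpow', qPoch_succ',
    inv_mul_cancel_right₀ hq, show -(-(j : ℤ) - 1) = ((j + 1 : ℕ) : ℤ) by push_cast; ring,
    zpow_natCast]
  ring

include hq hq1 ha hb habq in
theorem pastroCoeff_succ_eq (j k : ℕ) :
    pastroCoeff q a b (j + 1 + k) (k + 1) = pastroCoeff q a b (j + 1 + k) k *
      (a * b⁻¹ * (1 - q * q ^ j) * (1 - b * q⁻¹ * q * q ^ k) /
        (q * (1 - a * b⁻¹ * q ^ j) * (1 - q * q ^ k))) := by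
  have e1 : q ^ (-((j + 1 + k : ℕ) : ℤ)) * q ^ k = (q * q ^ j)⁻¹ := by
    rw [zpow_neg, zpow_natCast, pow_add, mul_inv, mul_assoc, inv_mul_cancel₀ (pow_ne_zero _ hq),
      mul_one, pow_succ']
  have e2 : a⁻¹ * b * q ^ (1 - ((j + 1 + k : ℕ) : ℤ)) * q ^ k = (a * b⁻¹ * q ^ j)⁻¹ := by
    rw [mul_assoc (a⁻¹ * b), ← zpow_natCast q k, ← zpow_add₀ hq,
      show 1 - ((j + 1 + k : ℕ) : ℤ) + k = -(j : ℤ) by push_cast; ring, zpow_neg, zpow_natCast,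
      mul_inv, mul_inv, inv_inv]
  have hv := mul_inv_mul_pow_ne_one habq j
  have h1 := sub_ne_zero.mpr hv.symm
  have h2 := sub_ne_zero.mpr (mul_pow_ne_one_of_zpow_ne_one hq1 k).symm
  have h3 : 1 - (a * b⁻¹ * q ^ j)⁻¹ ≠ 0 := by
    rw [sub_ne_zero, ne_comm, inv_ne_one]; exact hv
  rw [pastroCoeff_succ]
  congr 1
  rw [e1, e2, inv_mul_cancel_right₀ hq, div_eq_div_iff (by positivity) (by positivity)]
  field_simp
  ring

include hq hq1 ha hb hbq habq in
theorem neg_pastroBeta_mul_pastroCoeff (j k : ℕ) :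
    -pastroBeta q a b (j + k) * pastroCoeff q a b (j + k) k =
      pastroPCoeff q (a * b⁻¹) (b * q⁻¹) j k := by
  induction k generalizing j with
  | zero =>
    have := qPoch_ne_zero (q := q) (k := j) fun i _ => by simpa using hbq i
    have ht : a * b⁻¹ ≠ 0 := by simp [ha, hb]
    rw [add_zero, neg_pastroBeta_eq hq, pastroCoeff_zero_eq hq hq1 ha hb, pastroPCoeff,
      qBinom_zero_right (mul_pow_ne_one_of_zpow_ne_one hq1), show a⁻¹ * b = (a * b⁻¹)⁻¹ by
        rw [mul_inv, inv_inv]]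
    simp only [qPoch_succ, qPoch_zero, add_zero, pow_zero, zero_add, pow_one]
    generalize a * b⁻¹ = t at *
    rw [mul_pow, inv_pow]
    field_simp
    ring
  | succ k ih =>
    rw [show j + (k + 1) = j + 1 + k by ring, pastroCoeff_succ_eq hq hq1 ha hb habq, ← mul_assoc,
      ih,
      pastroPCoeff_succ_right hq (mul_pow_ne_one_of_zpow_ne_one hq1)
        (mul_inv_mul_pow_ne_one habq j)]

include hq hq1 ha hb hbq in
theorem pastroR_inv_eq_sum (n : ℕ) (x : ℝ) :
    pastroR q a b n x⁻¹ =
      ∑ k ∈ Finset.range (n + 1), pastroRCoeff q (a * b⁻¹) (b * q⁻¹) k (n - k) * x ^ k := by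
  rw [pastroR_eq_const_mul_sum, Finset.mul_sum]
  refine Finset.sum_congr rfl fun k hk => ?_
  obtain ⟨m, rfl⟩ := Nat.exists_eq_add_of_le (Nat.lt_succ_iff.mp (Finset.mem_range.mp hk))
  rw [Nat.add_sub_cancel_left, ← pastroRConst_mul_pastroRTerm hq hq1 ha hb hbq k m, mul_comm a,
    ← div_div, div_inv_eq_mul]
  ring

include hq hq1 ha hb hbq habq in
theorem pastroBeta_mul_pow_mul_pastroP_inv {x : ℝ} (hx : x ≠ 0) (n : ℕ) :
    pastroBeta q a b n * x ^ n * pastroP q a b n x⁻¹ =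
      -∑ k ∈ Finset.range (n + 1), pastroPCoeff q (a * b⁻¹) (b * q⁻¹) k (n - k) * x ^ k := by
  rw [pastroP, Finset.mul_sum, ← Finset.sum_range_reflect _ (n + 1), ← Finset.sum_neg_distrib]
  refine Finset.sum_congr rfl fun k hk => ?_
  obtain ⟨m, rfl⟩ := Nat.exists_eq_add_of_le (Nat.lt_succ_iff.mp (Finset.mem_range.mp hk))
  rw [show k + m + 1 - 1 - k = m by omega, Nat.add_sub_cancel_left,
    ← neg_pastroBeta_mul_pastroCoeff hq hq1 ha hb hbq habq k m]
  have hxm : x ^ m * x⁻¹ ^ m = 1 := by rw [← mul_pow, mul_inv_cancel₀ hx, one_pow]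
  linear_combination (pastroBeta q a b (k + m) * pastroCoeff q a b (k + m) m * x ^ k) * hxm

end ClosedForms

/-- Second Baxter recurrence: with `Q_n(x) = R_n(x⁻¹)`,
`Q_{n+1}(x) = x Q_n(x) - β_n x^n P_n(x⁻¹)` with
`β_n = -(a⁻¹ b)^(-n-1) (b q⁻¹;q)_{n+1} / (a b⁻¹ q;q)_{n+1}`. -/
theorem pastro_baxter_second (q a b : ℝ) (hq : q ≠ 0) (hq1 : ∀ k : ℤ, k ≠ 0 → q ^ k ≠ 1)
    (ha : a ≠ 0) (hb : b ≠ 0)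
    (hbq : ∀ m : ℤ, b * q ^ m ≠ 1) (habq : ∀ m : ℤ, a⁻¹ * b * q ^ m ≠ 1)
    (n : ℕ) (x : ℝ) (hx : x ≠ 0) :
    pastroR q a b (n + 1) x⁻¹ =
      x * pastroR q a b n x⁻¹ -
        (-(a⁻¹ * b) ^ (-(n : ℤ) - 1) * qPoch q (b * q⁻¹) (n + 1) /
            qPoch q (a * b⁻¹ * q) (n + 1)) *
          x ^ n * pastroP q a b n x⁻¹ := by
  have hqq := mul_pow_ne_one_of_zpow_ne_one hq1
  have ht : ∀ j : ℕ, a * b⁻¹ * q * q ^ j ≠ 1 := fun j => by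
    simpa only [pow_succ', ← mul_assoc] using mul_inv_mul_pow_ne_one habq (j + 1)
  rw [pastroR_inv_eq_sum hq hq1 ha hb hbq, pastroR_inv_eq_sum hq hq1 ha hb hbq]
  change _ = _ - pastroBeta q a b n * x ^ n * pastroP q a b n x⁻¹
  rw [pastroBeta_mul_pow_mul_pastroP_inv hq hq1 ha hb hbq habq hx, sub_neg_eq_add]
  exact sum_range_succ_mul_pow_eq
    (fun k => by rw [pastroRCoeff_zero_right hqq ht, pastroRCoeff_zero_right hqq ht])
    (pastroRCoeff_zero_succ hqq _) (pastroRCoeff_succ_succ hqq ht _) n x
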